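/- arXiv:1704.02494 — 9 statements merged into one kernel-verified Lean document; each statement's English description precedes it below -/
import Mathlib

section
/- The family of sparse subsets of an infinite group G, together with the empty set, is closed under finite unions and subsets, i.e., if A and B are sparse then A ∪ B is sparse, and any subset of a sparse set is sparse or empty. -/
open Pointwise

def Sparse {G : Type*} [Group G] (A : Set G) : Prop :=
  ∀ X : Set G, X.Infinite → ∃ F : Finset G, F.Nonempty ∧ ↑F ⊆ X ∧
    (⋂ g ∈ F, (g • A : Set G)).Finite

lemma sparse_select {G : Type*} [Group G] (A B : Set G) (F : Finset G) :
    ∀ S : Set G, (S ∩ ⋂ g ∈ F, (g • (A ∪ B) : Set G)).Infinite →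
      ∃ φ : G → Bool, (S ∩ ⋂ g ∈ F, (g • (if φ g then A else B) : Set G)).Infinite := by
  classical
  induction F using Finset.induction_on with
  | empty => intro S h; exact ⟨fun _ => true, by simpa using h⟩
  | @insert a F ha ih =>
    intro S h
    rw [Finset.set_biInter_insert, Set.smul_set_union] at h
    have hsplit : S ∩ ((a • A ∪ a • B) ∩ ⋂ g ∈ F, (g • (A ∪ B) : Set G)) =
        ((S ∩ a • A) ∩ ⋂ g ∈ F, (g • (A ∪ B) : Set G)) ∪
        ((S ∩ a • B) ∩ ⋂ g ∈ F, (g • (A ∪ B) : Set G)) := by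
      ext x; simp; tauto
    rw [hsplit, Set.infinite_union] at h
    rcases h with h | h
    · obtain ⟨φ, hφ⟩ := ih (S ∩ a • A) h
      refine ⟨Function.update φ a true, ?_⟩
      have heq : S ∩ ⋂ g ∈ insert a F,
          (g • (if Function.update φ a true g then A else B) : Set G) =
          (S ∩ a • A) ∩ ⋂ g ∈ F, (g • (if φ g then A else B) : Set G) := by
        rw [Finset.set_biInter_insert, Function.update_self]
        have : (⋂ g ∈ F, (g • (if Function.update φ a true g then A else B) : Set G)) =
            ⋂ g ∈ F, (g • (if φ g then A else B) : Set G) :=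
          Set.iInter₂_congr fun g hg => by
            rw [Function.update_of_ne (fun hgg => ha (by rw [← hgg]; exact hg))]
        rw [this]; simp only [if_true]; ext x; simp; tauto
      rwa [heq]
    · obtain ⟨φ, hφ⟩ := ih (S ∩ a • B) h
      refine ⟨Function.update φ a false, ?_⟩
      have heq : S ∩ ⋂ g ∈ insert a F,
          (g • (if Function.update φ a false g then A else B) : Set G) =
          (S ∩ a • B) ∩ ⋂ g ∈ F, (g • (if φ g then A else B) : Set G) := by
        rw [Finset.set_biInter_insert, Function.update_self]
        have : (⋂ g ∈ F, (g • (if Function.update φ a false g then A else B) : Set G)) =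
            ⋂ g ∈ F, (g • (if φ g then A else B) : Set G) :=
          Set.iInter₂_congr fun g hg => by
            rw [Function.update_of_ne (fun hgg => ha (by rw [← hgg]; exact hg))]
        rw [this]; simp only [Bool.false_eq_true, if_false]; ext x; simp; tauto
      rwa [heq]

lemma sparse_union {G : Type*} [Group G] [Infinite G] (A B : Set G)
    (hA : Sparse A) (hB : Sparse B) : Sparse (A ∪ B) := by
  classical
  intro X hX
  by_contra hcon
  push_neg at hcon
  have h : ∀ F : Finset G, ↑F ⊆ X → (⋂ g ∈ F, (g • (A ∪ B) : Set G)).Infinite := by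
    intro F hF
    rcases F.eq_empty_or_nonempty with rfl | hne
    · simpa using Set.infinite_univ
    · exact hcon F hne hF
  let ι := {F : Finset G // ↑F ⊆ X}
  let Z : ι → Set (G → Bool) := fun F =>
    {φ | (⋂ g ∈ F.1, (g • (if φ g then A else B) : Set G)).Infinite}
  have hZne : ∀ F, (Z F).Nonempty := by
    intro F
    obtain ⟨φ, hφ⟩ := sparse_select A B F.1 Set.univ (by simpa using h F.1 F.2)
    rw [Set.univ_inter] at hφ
    exact ⟨φ, hφ⟩
  have hZcl : ∀ F, IsClosed (Z F) := by
    intro F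
    have hE : Z F = (fun φ : G → Bool => fun g : F.1 => φ g) ⁻¹'
        {ψ : F.1 → Bool | (⋂ g : F.1, ((g : G) • (if ψ g then A else B) : Set G)).Infinite} := by
      ext φ
      simp only [Set.mem_preimage, Set.mem_setOf_eq, Z]
      have : (⋂ g ∈ F.1, (g • (if φ g then A else B) : Set G)) =
          ⋂ g : F.1, ((g : G) • (if φ g then A else B) : Set G) := by
        ext x; simp
      rw [this]
    rw [hE]
    exact (isClosed_discrete _).preimage (continuous_pi fun g => continuous_apply _)
  have hZdir : Directed (· ⊇ ·) Z := by
    intro F₁ F₂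
    refine ⟨⟨F₁.1 ∪ F₂.1, by
      push_cast; exact Set.union_subset F₁.2 F₂.2⟩, ?_, ?_⟩
    · intro φ hφ
      exact hφ.mono (Set.biInter_subset_biInter_left (fun g hg => Finset.mem_union_left _ hg))
    · intro φ hφ
      exact hφ.mono (Set.biInter_subset_biInter_left (fun g hg => Finset.mem_union_right _ hg))
  have : Nonempty ι := ⟨⟨∅, by simp⟩⟩
  obtain ⟨φ, hφ⟩ := IsCompact.nonempty_iInter_of_directed_nonempty_isCompact_isClosed
    Z hZdir hZne (fun F => (hZcl F).isCompact) hZcl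
  have hφ' : ∀ F : ι, φ ∈ Z F := by
    intro F; exact Set.mem_iInter.mp hφ F
  have hXsplit : ({g ∈ X | φ g = true} ∪ {g ∈ X | φ g = false}).Infinite := by
    refine hX.mono ?_
    intro g hg
    rcases Bool.eq_false_or_eq_true (φ g) with h1 | h1
    · exact Or.inl ⟨hg, h1⟩
    · exact Or.inr ⟨hg, h1⟩
  rw [Set.infinite_union] at hXsplit
  rcases hXsplit with hinf | hinf
  · obtain ⟨F, hFne, hFsub, hFfin⟩ := hA _ hinf
    have hmem := hφ' ⟨F, fun g hg => (hFsub hg).1⟩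
    have heq : (⋂ g ∈ F, (g • (if φ g then A else B) : Set G)) = ⋂ g ∈ F, (g • A : Set G) :=
      Set.iInter₂_congr fun g hg => by
        have := (hFsub hg).2; rw [this]; simp
    exact absurd hFfin (by rw [← heq]; exact hmem)
  · obtain ⟨F, hFne, hFsub, hFfin⟩ := hB _ hinf
    have hmem := hφ' ⟨F, fun g hg => (hFsub hg).1⟩
    have heq : (⋂ g ∈ F, (g • (if φ g then A else B) : Set G)) = ⋂ g ∈ F, (g • B : Set G) :=
      Set.iInter₂_congr fun g hg => by
        have := (hFsub hg).2
        rw [this]; simp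
    exact absurd hFfin (by rw [← heq]; exact hmem)

/-- Sparse sets are closed under finite unions and under taking subsets. -/
theorem sparse_ideal {G : Type*} [Group G] [Infinite G] :
    (∀ A B : Set G, Sparse A → Sparse B → Sparse (A ∪ B)) ∧
    (∀ A B : Set G, A ⊆ B → Sparse B → Sparse A) := by
  constructor
  · exact fun A B hA hB => sparse_union A B hA hB
  · intro A B hAB hB X hX
    obtain ⟨F, h1, h2, h3⟩ := hB X hX
    exact ⟨F, h1, h2, h3.subset (Set.iInter₂_mono fun g _ => Set.smul_set_mono hAB)⟩
end

section
/- A subset A of a group G is thin if and only if for every free ultrafilter p on G, the set Δ_p(A) = {g ∈ G : A ∈ g·p} has at most one element. -/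
open Pointwise

/-- The `p`-companion `Δ_p(A) = {g : A ∈ g·p}`, where `A ∈ g·p ↔ g⁻¹A ∈ p`. -/
def companion {G : Type*} [Group G] (p : Ultrafilter G) (A : Set G) : Set G :=
  {g : G | (g⁻¹ • A : Set G) ∈ p}

/-- `A` is thin iff `Δ_p(A)` has at most one element for every free ultrafilter `p`. -/
theorem thin_iff_companion_subsingleton {G : Type*} [Group G] [Infinite G] (A : Set G) :
    (∀ g : G, g ≠ 1 → ((g • A) ∩ A).Finite) ↔
      ∀ p : Ultrafilter G, (∀ S ∈ p, (S : Set G).Infinite) →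
        (companion p A).Subsingleton := by
  constructor
  · intro hthin p hp g hg h hh
    by_contra hne
    have hmem : (g⁻¹ • A : Set G) ∩ (h⁻¹ • A : Set G) ∈ p := p.inter_mem hg hh
    have hinf : ((g⁻¹ • A : Set G) ∩ (h⁻¹ • A : Set G)).Infinite := hp _ hmem
    have hinf2 : ((g • ((g⁻¹ • A : Set G) ∩ (h⁻¹ • A : Set G))) : Set G).Infinite :=
      hinf.image (MulAction.injective g).injOn
    rw [Set.smul_set_inter, smul_inv_smul, smul_smul] at hinf2
    have hgh : g * h⁻¹ ≠ 1 := by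
      intro h1
      exact hne (by rwa [mul_inv_eq_one] at h1)
    have := hthin (g * h⁻¹) hgh
    rw [Set.inter_comm] at hinf2
    exact hinf2 this
  · intro H g hg
    by_contra hinf
    rw [← Set.not_infinite, not_not] at hinf
    set B : Set G := (g • A) ∩ A with hB
    have : (Filter.cofinite ⊓ Filter.principal B).NeBot :=
      hinf.cofinite_inf_principal_neBot
    set p := Ultrafilter.of (Filter.cofinite ⊓ Filter.principal B) with hp
    have hle : (p : Filter G) ≤ Filter.cofinite ⊓ Filter.principal B := Ultrafilter.of_le _
    have hBp : B ∈ p := hle (Filter.mem_inf_of_right (Filter.mem_principal_self B))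
    have hcof : ∀ S ∈ p, (S : Set G).Infinite := by
      intro S hS
      by_contra hfin
      rw [Set.not_infinite] at hfin
      have : Sᶜ ∈ p := hle (Filter.mem_inf_of_left hfin.compl_mem_cofinite)
      exact (Filter.empty_notMem (p : Filter G)) (by simpa using p.inter_mem hS this)
    have h1 : (1 : G) ∈ companion p A := by
      simp only [companion, Set.mem_setOf_eq, inv_one, one_smul]
      exact Filter.mem_of_superset hBp Set.inter_subset_right
    have h2 : g⁻¹ ∈ companion p A := by
      simp only [companion, Set.mem_setOf_eq, inv_inv]
      exact Filter.mem_of_superset hBp Set.inter_subset_left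
    have := H p hcof h1 h2
    exact hg (by rw [← inv_inv g, ← this, inv_one])
end

section
/- A subset A of a group G is n-thin if and only if for every free ultrafilter p on G, the set Δ_p(A) = {g ∈ G : A ∈ g·p} has at most n elements. -/
open Pointwise

def NThin {G : Type*} [Group G] (A : Set G) (n : ℕ) : Prop :=
  ∀ g : Fin (n + 1) → G, Function.Injective g → (⋂ i, ((g i) • A : Set G)).Finite

/-!
A set is finite iff it lies in no free ultrafilter, and `⋂ i, gᵢ⁻¹ • A ∈ p` iff every `gᵢ` lies
in `companion p A = Δ_p(A)`. Hence `n + 1` distinct elements of some `Δ_p(A)` are the same thing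
as `n + 1` distinct translates of `A` with infinite intersection.
-/

open Filter Function

theorem Ultrafilter.infinite_of_le_cofinite {α : Type*} {p : Ultrafilter α}
    (hp : (p : Filter α) ≤ cofinite) {S : Set α} (hS : S ∈ p) : S.Infinite :=
  fun hfin => Ultrafilter.compl_notMem_iff.2 hS (hp hfin.compl_mem_cofinite)

theorem Set.finite_iff_forall_free_ultrafilter_notMem {α : Type*} {S : Set α} :
    S.Finite ↔ ∀ p : Ultrafilter α, (∀ T ∈ p, T.Infinite) → S ∉ p := by
  refine ⟨fun hS p hfree hSp => hfree S hSp hS, fun h => ?_⟩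
  by_contra hS
  have := (Set.not_finite.1 hS).cofinite_inf_principal_neBot
  have hp := Ultrafilter.of_le (cofinite ⊓ 𝓟 S)
  exact h (.of _) (fun _ => Ultrafilter.infinite_of_le_cofinite (hp.trans inf_le_left))
    (hp.trans inf_le_right (mem_principal_self S))

theorem Set.forall_finset_subset_card_le_iff {α : Type*} {S : Set α} {n : ℕ} :
    (∀ F : Finset α, ↑F ⊆ S → F.card ≤ n) ↔
      ∀ g : Fin (n + 1) → α, Injective g → ¬ ∀ i, g i ∈ S := by
  classical
  constructor
  · intro h g hg hgS
    have := h (Finset.univ.image g) (by simpa [Set.subset_def] using hgS)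
    rw [Finset.card_image_of_injective _ hg] at this
    simp at this
  · intro h F hF
    by_contra! hlt
    obtain ⟨e⟩ : Nonempty (Fin (n + 1) ↪ F) :=
      Function.Embedding.nonempty_of_card_le (by simpa using hlt)
    exact h (Subtype.val ∘ e) (Subtype.val_injective.comp e.injective) fun i => hF (e i).2

theorem iInter_inv_smul_mem_iff_forall_mem_companion {G ι : Type*} [Group G] [Finite ι]
    (p : Ultrafilter G) (A : Set G) (g : ι → G) :
    (⋂ i, (g i)⁻¹ • A) ∈ p ↔ ∀ i, g i ∈ companion p A :=
  iInter_mem (f := (p : Filter G))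

theorem nThin_iff_forall_iInter_inv_smul_finite {G : Type*} [Group G] (A : Set G) (n : ℕ) :
    NThin A n ↔ ∀ g : Fin (n + 1) → G, Injective g → (⋂ i, (g i)⁻¹ • A).Finite := by
  rw [NThin, inv_surjective.forall]
  exact forall_congr' fun g => imp_congr_left (inv_injective.of_comp_iff g)

theorem nthin_iff_companion_card_general {G : Type*} [Group G] (A : Set G) (n : ℕ) :
    NThin A n ↔
      ∀ p : Ultrafilter G, (∀ S ∈ p, (S : Set G).Infinite) →
        ∀ F : Finset G, (F : Set G) ⊆ companion p A → F.card ≤ n := by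
  simp only [nThin_iff_forall_iInter_inv_smul_finite, Set.finite_iff_forall_free_ultrafilter_notMem,
    iInter_inv_smul_mem_iff_forall_mem_companion, Set.forall_finset_subset_card_le_iff]
  exact ⟨fun h p hp g hg => h g hg p hp, fun h g hg p hp => h p hp g hg⟩

/-- `A` is `n`-thin iff `Δ_p(A)` has at most `n` elements for every free ultrafilter `p`. -/
theorem nthin_iff_companion_card {G : Type*} [Group G] [Infinite G] (A : Set G) (n : ℕ) :
    NThin A n ↔
      ∀ p : Ultrafilter G, (∀ S ∈ p, (S : Set G).Infinite) →
        ∀ F : Finset G, (F : Set G) ⊆ companion p A → F.card ≤ n :=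
  nthin_iff_companion_card_general A n
end

section
/- A subset A of a group G is large if and only if for every free ultrafilter p on G, the set Δ_p(A) = {g ∈ G : A ∈ g·p} is nonempty. -/
open Pointwise

def Large {G : Type*} [Group G] (A : Set G) : Prop :=
  ∃ F : Finset G, (F : Set G) * A = Set.univ

lemma finset_mul_eq_iUnion {G : Type*} [Group G] (F : Finset G) (A : Set G) :
    (F : Set G) * A = ⋃ f ∈ (F : Set G), f • A := by
  ext x
  simp [Set.mem_mul, Set.mem_smul_set, eq_comm]

lemma not_large_infinite_compl {G : Type*} [Group G] [Infinite G] {A : Set G}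
    (hA : ¬ Large A) (F : Finset G) : ((F : Set G) * A)ᶜ.Infinite := by
  classical
  by_contra h
  rw [Set.not_infinite] at h
  rcases A.eq_empty_or_nonempty with rfl | ⟨a, ha⟩
  · rw [Set.mul_empty, Set.compl_empty] at h
    exact Set.infinite_univ h
  · apply hA
    refine ⟨F ∪ (h.toFinset.image (· * a⁻¹)), ?_⟩
    ext x
    simp only [Set.mem_univ, iff_true]
    by_cases hx : x ∈ (F : Set G) * A
    · apply Set.mul_subset_mul_right _ hx
      exact_mod_cast Finset.subset_union_left
    · refine ⟨x * a⁻¹, ?_, a, ha, by group⟩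
      simp only [Finset.coe_union, Set.mem_union, Finset.coe_image, Set.mem_image,
        Set.Finite.coe_toFinset]
      right
      exact ⟨x, by simpa using hx, rfl⟩

/-- `A` is large iff `Δ_p(A)` is nonempty for every free ultrafilter `p`. -/
theorem large_iff_companions_nonempty {G : Type*} [Group G] [Infinite G] (A : Set G) :
    Large A ↔
      ∀ p : Ultrafilter G, (∀ S ∈ p, (S : Set G).Infinite) →
        (companion p A).Nonempty := by
  constructor
  · rintro ⟨F, hF⟩ p _
    have huniv : (⋃ f ∈ (F : Set G), f • A) ∈ p := by
      rw [← finset_mul_eq_iUnion, hF]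
      exact Filter.univ_mem
    rw [Ultrafilter.finite_biUnion_mem_iff F.finite_toSet] at huniv
    obtain ⟨f, _, hfA⟩ := huniv
    exact ⟨f⁻¹, by simpa [companion] using hfA⟩
  · contrapose!
    intro hA
    classical
    set l : Filter G := ⨅ F : Finset G, (Filter.cofinite ⊓ Filter.principal ((F : Set G) * A)ᶜ)
      with hl
    have hdir : Directed (· ≥ ·)
        (fun F : Finset G => Filter.cofinite ⊓ Filter.principal ((F : Set G) * A)ᶜ) := by
      intro F1 F2
      refine ⟨F1 ∪ F2, inf_le_inf_left _ ?_, inf_le_inf_left _ ?_⟩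
      · rw [Filter.principal_mono]
        exact Set.compl_subset_compl.2 (Set.mul_subset_mul_right
          (by exact_mod_cast Finset.subset_union_left))
      · rw [Filter.principal_mono]
        exact Set.compl_subset_compl.2 (Set.mul_subset_mul_right
          (by exact_mod_cast Finset.subset_union_right))
    have hne : l.NeBot := by
      refine Filter.iInf_neBot_of_directed hdir ?_
      intro F
      exact (not_large_infinite_compl hA F).cofinite_inf_principal_neBot
    set p : Ultrafilter G := Ultrafilter.of l with hp
    have hple : (p : Filter G) ≤ l := Ultrafilter.of_le l
    have hcof : (p : Filter G) ≤ Filter.cofinite := by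
      have h0 : l ≤ Filter.cofinite :=
        le_trans (iInf_le (fun F : Finset G =>
          Filter.cofinite ⊓ Filter.principal ((F : Set G) * A)ᶜ) (∅ : Finset G)) inf_le_left
      exact le_trans hple h0
    refine ⟨p, ?_, ?_⟩
    · intro S hS
      by_contra hfin
      rw [Set.not_infinite] at hfin
      have hSc : Sᶜ ∈ (p : Filter G) := hcof (by rw [Filter.mem_cofinite, compl_compl]; exact hfin)
      have hemp : (∅ : Set G) ∈ (p : Filter G) := by
        have h2 := Filter.inter_mem (Ultrafilter.mem_coe.2 hS) hSc
        simpa using h2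
      exact Filter.empty_notMem (p : Filter G) hemp
    · ext g
      simp only [companion, Set.mem_setOf_eq, Set.mem_empty_iff_false, iff_false]
      intro hg
      have hc : (g⁻¹ • A)ᶜ ∈ p := by
        have h1 : l ≤ Filter.principal (((({g⁻¹} : Finset G) : Set G)) * A)ᶜ :=
          le_trans (iInf_le _ ({g⁻¹} : Finset G)) inf_le_right
        have h2 := (le_trans hple h1) (Filter.mem_principal_self _)
        have heq : ((({g⁻¹} : Finset G) : Set G)) * A = g⁻¹ • A := by
          ext x
          simp only [Set.mem_mul, Set.mem_smul_set, Finset.coe_singleton,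
            Set.mem_singleton_iff]
          constructor
          · rintro ⟨a, rfl, b, hb, rfl⟩; exact ⟨b, hb, rfl⟩
          · rintro ⟨b, hb, rfl⟩; exact ⟨g⁻¹, rfl, b, hb, rfl⟩
        rwa [heq] at h2
      have hemp : (∅ : Set G) ∈ (p : Filter G) := by
        have h2 := Filter.inter_mem (Ultrafilter.mem_coe.2 hg) (Ultrafilter.mem_coe.2 hc)
        simpa using h2
      exact Filter.empty_notMem (p : Filter G) hemp
end

section
/- Let {A_n : n < ω} be a family of sparse subsets of a group G and A = ⋃_n A_n. Suppose (i) for every finite F ⊆ G there exists a finite K ⊆ G such that F(A_i \ K) ∩ F(A_j \ K) = ∅ for all i < j < ω, and (ii) for every g ∈ G with g ≠ e there exists m ∈ ω such that gx ∉ A for each x ∈ ⋃_{n>m} A_n. Then A is sparse. -/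
open Pointwise

/-- Lemma 3.1: a union of countably many sparse sets satisfying the
separation conditions (i), (ii) is sparse. -/
theorem union_sparse {G : Type*} [Group G] [Infinite G] (A : ℕ → Set G)
    (hsp : ∀ n, Sparse (A n))
    (h1 : ∀ F : Finset G, ∃ K : Finset G, ∀ i j : ℕ, i < j →
      ((F : Set G) * (A i \ K)) ∩ ((F : Set G) * (A j \ K)) = ∅)
    (h2 : ∀ g : G, g ≠ 1 → ∃ m : ℕ, ∀ n > m, ∀ x ∈ A n, g * x ∉ ⋃ k, A k) :
    Sparse (⋃ n, A n) := by
  classical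
  intro X hX
  obtain ⟨x₀, hx₀, x₁, hx₁, hne⟩ := hX.nontrivial
  obtain ⟨m, hm⟩ := h2 (x₁⁻¹ * x₀) (by
    intro h
    rw [inv_mul_eq_one] at h
    exact hne h.symm)
  choose Fi hFiNe hFiX hFiFin using fun i => hsp i X hX
  set F : Finset G := insert x₀ (insert x₁ ((Finset.range (m+1)).biUnion Fi)) with hF
  obtain ⟨K, hK⟩ := h1 F
  have hx₀F : x₀ ∈ F := Finset.mem_insert_self _ _
  have hx₁F : x₁ ∈ F := Finset.mem_insert_of_mem (Finset.mem_insert_self _ _)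
  refine ⟨F, ⟨x₀, hx₀F⟩, ?_, ?_⟩
  · intro g hg
    rw [Finset.mem_coe, hF, Finset.mem_insert, Finset.mem_insert,
      Finset.mem_biUnion] at hg
    rcases hg with rfl | rfl | ⟨i, -, hgi⟩
    · exact hx₀
    · exact hx₁
    · exact hFiX i hgi
  · have hfin : ((x₀ • (K : Set G)) ∪ ((F : Set G) * (K : Set G)) ∪
        ⋃ i ∈ Finset.range (m+1), ⋂ g ∈ Fi i, (g • A i : Set G)).Finite := by
      refine Set.Finite.union (Set.Finite.union ?_ ?_) ?_
      · exact (K.finite_toSet).smul_set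
      · exact (F.finite_toSet).mul K.finite_toSet
      · exact Set.Finite.biUnion (Finset.range (m+1)).finite_toSet
          (fun i _ => hFiFin i)
    refine hfin.subset ?_
    intro z hz
    rw [Set.mem_iInter₂] at hz
    have hzx₀ := hz x₀ hx₀F
    have hzx₁ := hz x₁ hx₁F
    rw [Set.mem_smul_set_iff_inv_smul_mem, smul_eq_mul] at hzx₀ hzx₁
    obtain ⟨n, hn⟩ := Set.mem_iUnion.mp hzx₀
    have hnm : n ≤ m := by
      by_contra hc
      push_neg at hc
      refine hm n hc _ hn ?_
      have he : x₁⁻¹ * x₀ * (x₀⁻¹ * z) = x₁⁻¹ * z := by group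
      rw [he]
      exact hzx₁
    by_cases haK : x₀⁻¹ * z ∈ K
    · left; left
      rw [Set.mem_smul_set_iff_inv_smul_mem, smul_eq_mul]
      exact_mod_cast haK
    · by_cases hFK : ∃ g' ∈ F, g'⁻¹ * z ∈ K
      · obtain ⟨g', hg', hk⟩ := hFK
        left; right
        have he : z = g' * (g'⁻¹ * z) := by group
        rw [he]
        exact Set.mul_mem_mul (Finset.mem_coe.mpr hg') (Finset.mem_coe.mpr hk)
      · push_neg at hFK
        right
        refine Set.mem_iUnion₂.mpr ⟨n, Finset.mem_range.mpr (Nat.lt_succ_of_le hnm), ?_⟩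
        refine Set.mem_iInter₂.mpr fun g' hg'n => ?_
        have hg'F : g' ∈ F := by
          rw [hF]
          exact Finset.mem_insert_of_mem (Finset.mem_insert_of_mem
            (Finset.mem_biUnion.mpr
              ⟨n, Finset.mem_range.mpr (Nat.lt_succ_of_le hnm), hg'n⟩))
        have hzg' := hz g' hg'F
        rw [Set.mem_smul_set_iff_inv_smul_mem, smul_eq_mul] at hzg'
        obtain ⟨j, hj⟩ := Set.mem_iUnion.mp hzg'
        have hz1 : z ∈ (F : Set G) * (A n \ ↑K) := by
          have he : z = x₀ * (x₀⁻¹ * z) := by group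
          rw [he]
          exact Set.mul_mem_mul (Finset.mem_coe.mpr hx₀F)
            ⟨hn, fun h => haK (Finset.mem_coe.mp h)⟩
        have hz2 : z ∈ (F : Set G) * (A j \ ↑K) := by
          have he : z = g' * (g'⁻¹ * z) := by group
          rw [he]
          exact Set.mul_mem_mul (Finset.mem_coe.mpr hg'F)
            ⟨hj, fun h => hFK g' hg'F (Finset.mem_coe.mp h)⟩
        have hjn : j = n := by
          by_contra hjne
          rcases Ne.lt_or_gt hjne with h | h
          · exact Set.eq_empty_iff_forall_notMem.mp (hK j n h) z ⟨hz2, hz1⟩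
          · exact Set.eq_empty_iff_forall_notMem.mp (hK n j h) z ⟨hz1, hz2⟩
        rw [Set.mem_smul_set_iff_inv_smul_mem, smul_eq_mul]
        rw [hjn] at hj
        exact hj
end

section
/- For every infinite group G, there exists a sparse subset A of G that is not n-thin for any n ∈ ℕ; consequently the ideal FT_G of finitely thin sets is strictly contained in the ideal Sp_G of sparse sets. -/
open Pointwise

set_option linter.unusedSectionVars false

namespace FTSP

attribute [local instance] Classical.decEq

variable {G : Type*} [Group G] [Infinite G]

/-- An element outside a given finite set. -/
noncomputable def pick (S : Finset G) : G := (Infinite.exists_notMem_finset S).choose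

lemma pick_not_mem (S : Finset G) : pick S ∉ S :=
  (Infinite.exists_notMem_finset S).choose_spec

/-- The alphabet: elements of `S`, their inverses, and `1`. -/
noncomputable def alph (S : Finset G) : Finset G :=
  letI := Classical.decEq G
  (S ∪ S.image (·⁻¹)) ∪ {1}

lemma one_mem_alph (S : Finset G) : (1 : G) ∈ alph S := by
  classical
  simp [alph]

lemma mem_alph_of_mem {S : Finset G} {x : G} (h : x ∈ S) : x ∈ alph S := by
  classical
  simp only [alph, Finset.mem_union]
  exact Or.inl (Or.inl h)

lemma inv_mem_alph_of_mem {S : Finset G} {x : G} (h : x ∈ S) : x⁻¹ ∈ alph S := by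
  classical
  simp only [alph, Finset.mem_union, Finset.mem_image]
  exact Or.inl (Or.inr ⟨x, h, rfl⟩)

/-- All products of 7 letters from the alphabet of `S`. -/
noncomputable def bad (S : Finset G) : Finset G :=
  letI := Classical.decEq G
  ((((((alph S ×ˢ alph S) ×ˢ alph S) ×ˢ alph S) ×ˢ alph S) ×ˢ alph S) ×ˢ alph S).image
    (fun p => p.1.1.1.1.1.1 * p.1.1.1.1.1.2 * p.1.1.1.1.2 * p.1.1.1.2 * p.1.1.2 * p.1.2 * p.2)

lemma mem_bad {S : Finset G} {a b c d e f g : G} (ha : a ∈ alph S) (hb : b ∈ alph S)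
    (hc : c ∈ alph S) (hd : d ∈ alph S) (he : e ∈ alph S) (hf : f ∈ alph S)
    (hg : g ∈ alph S) : a * b * c * d * e * f * g ∈ bad S := by
  classical
  refine Finset.mem_image.2 ⟨((((((a, b), c), d), e), f), g), ?_, rfl⟩
  simp only [Finset.mem_product]
  exact ⟨⟨⟨⟨⟨⟨ha, hb⟩, hc⟩, hd⟩, he⟩, hf⟩, hg⟩

/-- First `k` members of the generic sequence, as a finite set. -/
noncomputable def seqAux : ℕ → Finset G
  | 0 => ∅
  | k + 1 =>
      letI := Classical.decEq G
      insert (pick (bad (seqAux k))) (seqAux k)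

/-- The generic sequence: each term avoids all 7-letter words in earlier terms. -/
noncomputable def u (k : ℕ) : G := pick (bad (seqAux (G := G) k))

lemma seqAux_eq (k : ℕ) : seqAux (G := G) k = (Finset.range k).image u := by
  classical
  induction k with
  | zero => simp [seqAux]
  | succ k ih =>
      rw [Finset.range_add_one, Finset.image_insert, ← ih]
      rfl

lemma u_not_bad (k : ℕ) : u (G := G) k ∉ bad ((Finset.range k).image u) := by
  rw [← seqAux_eq]
  exact pick_not_mem _

/-- `Letter k y` : `y` is `1`, or `u i` or `(u i)⁻¹` for some `i < k`. -/
def Letter (k : ℕ) (y : G) : Prop :=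
  y = 1 ∨ ∃ i, i < k ∧ (y = u i ∨ y = (u i)⁻¹)

lemma Letter.one (k : ℕ) : Letter k (1 : G) := Or.inl rfl

lemma Letter.of {i k : ℕ} (h : i < k) : Letter k (u (G := G) i) := Or.inr ⟨i, h, Or.inl rfl⟩

lemma Letter.inv_of {i k : ℕ} (h : i < k) : Letter k ((u (G := G) i)⁻¹) :=
  Or.inr ⟨i, h, Or.inr rfl⟩

lemma letter_mem {k : ℕ} {y : G} (h : Letter k y) :
    y ∈ alph ((Finset.range k).image u) := by
  rcases h with rfl | ⟨i, hi, rfl | rfl⟩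
  · exact one_mem_alph _
  · exact mem_alph_of_mem (Finset.mem_image.2 ⟨i, Finset.mem_range.2 hi, rfl⟩)
  · exact inv_mem_alph_of_mem (Finset.mem_image.2 ⟨i, Finset.mem_range.2 hi, rfl⟩)

lemma u_ne_word {k : ℕ} {a b c d e f g : G} (ha : Letter k a) (hb : Letter k b)
    (hc : Letter k c) (hd : Letter k d) (he : Letter k e) (hf : Letter k f)
    (hg : Letter k g) (h : u k = a * b * c * d * e * f * g) : False :=
  u_not_bad k (h ▸ mem_bad (letter_mem ha) (letter_mem hb) (letter_mem hc) (letter_mem hd)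
    (letter_mem he) (letter_mem hf) (letter_mem hg))

lemma u_inj : Function.Injective (u (G := G)) := by
  intro a b h
  by_contra hne
  rcases Nat.lt_or_ge a b with hab | hba
  · exact u_ne_word (Letter.of hab) (Letter.one b) (Letter.one b) (Letter.one b)
      (Letter.one b) (Letter.one b) (Letter.one b) (by rw [← h]; group)
  · have hba' : b < a := lt_of_le_of_ne hba (Ne.symm hne)
    exact u_ne_word (Letter.of hba') (Letter.one a) (Letter.one a) (Letter.one a)
      (Letter.one a) (Letter.one a) (Letter.one a) (by rw [h]; group)


/-! ### Pairing function arithmetic -/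

lemma pair_le_diag {a b c : ℕ} (ha : a ≤ c) (hb : b ≤ c) : Nat.pair a b ≤ Nat.pair c c := by
  simp only [Nat.pair]
  split <;> split <;> nlinarith

lemma pair_diag_lt {a b : ℕ} (h : a < b) : Nat.pair a a < Nat.pair b b := by
  simp only [Nat.pair]
  simp only [lt_irrefl, if_false]
  nlinarith

/-! ### The construction -/

/-- The `i`-th element of the `n`-th pattern. -/
noncomputable def th (n i : ℕ) : G := u (2 * Nat.pair n i)

/-- The translating elements. -/
noncomputable def xx (j : ℕ) : G := u (2 * Nat.pair j j + 1)

/-- The level of block `j`. -/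
def lvl (j : ℕ) : ℕ := (Nat.unpair j).1

lemma lvl_le (j : ℕ) : lvl j ≤ j := Nat.unpair_left_le j

lemma lvl_pair (n k : ℕ) : lvl (Nat.pair n k) = n := by
  simp [lvl, Nat.unpair_pair]

/-- The sparse-but-not-thin set. -/
noncomputable def bigA (G : Type*) [Group G] [Infinite G] : Set G :=
  {g | ∃ j i, i ≤ lvl j ∧ g = th (lvl j) i * xx j}

lemma th_inj {n m i i' : ℕ} (h : th (G := G) n i = th m i') : n = m ∧ i = i' := by
  have h2 := u_inj h
  have h3 : Nat.pair n i = Nat.pair m i' := by omega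
  exact Nat.pair_eq_pair.mp h3

lemma xx_inj {j j' : ℕ} (h : xx (G := G) j = xx j') : j = j' := by
  have h2 := u_inj h
  have h3 : Nat.pair j j = Nat.pair j' j' := by omega
  exact (Nat.pair_eq_pair.mp h3).1

/-- Letters for `th n i` inside the avoidance set of `xx M`. -/
lemma letter_th {n i M : ℕ} (hn : n ≤ M) (hi : i ≤ M) :
    Letter (2 * Nat.pair M M + 1) (th (G := G) n i) := by
  have := pair_le_diag hn hi
  exact Letter.of (by omega)

lemma letter_th_inv {n i M : ℕ} (hn : n ≤ M) (hi : i ≤ M) :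
    Letter (2 * Nat.pair M M + 1) ((th (G := G) n i)⁻¹) := by
  have := pair_le_diag hn hi
  exact Letter.inv_of (by omega)

lemma letter_xx {j M : ℕ} (h : j < M) :
    Letter (2 * Nat.pair M M + 1) (xx (G := G) j) := by
  have := pair_diag_lt h
  exact Letter.of (by omega)

lemma letter_xx_inv {j M : ℕ} (h : j < M) :
    Letter (2 * Nat.pair M M + 1) ((xx (G := G) j)⁻¹) := by
  have := pair_diag_lt h
  exact Letter.inv_of (by omega)

/-- Four `u`'s with pairwise distinct indices cannot satisfy `u p * (u q)⁻¹ = u r * (u s)⁻¹`. -/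
lemma L0 {p q r s : ℕ} (hpq : p ≠ q) (hpr : p ≠ r) (hps : p ≠ s) (hqr : q ≠ r)
    (hqs : q ≠ s) (hrs : r ≠ s) : u (G := G) p * (u q)⁻¹ ≠ u r * (u s)⁻¹ := by
  intro h
  rw [mul_inv_eq_iff_eq_mul] at h
  -- h : u p = u r * (u s)⁻¹ * u q
  have hd : (q < p ∧ r < p ∧ s < p) ∨ (p < q ∧ r < q ∧ s < q) ∨
      (p < r ∧ q < r ∧ s < r) ∨ (p < s ∧ q < s ∧ r < s) := by omega
  rcases hd with ⟨h1, h2, h3⟩ | ⟨h1, h2, h3⟩ | ⟨h1, h2, h3⟩ | ⟨h1, h2, h3⟩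
  · exact u_ne_word (Letter.of h2) (Letter.inv_of h3) (Letter.of h1) (Letter.one p)
      (Letter.one p) (Letter.one p) (Letter.one p) (by rw [h]; group)
  · exact u_ne_word (Letter.of h3) (Letter.inv_of h2) (Letter.of h1) (Letter.one q)
      (Letter.one q) (Letter.one q) (Letter.one q) (by rw [h]; group)
  · exact u_ne_word (Letter.of h1) (Letter.inv_of h2) (Letter.of h3) (Letter.one r)
      (Letter.one r) (Letter.one r) (Letter.one r) (by rw [h]; group)
  · exact u_ne_word (Letter.of h2) (Letter.inv_of h1) (Letter.of h3) (Letter.one s)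
      (Letter.one s) (Letter.one s) (Letter.one s) (by rw [h]; group)

/-- Quotient sets of distinct patterns meet only in `1`. -/
lemma th_q_eq {n m i i' k k' : ℕ} (hnm : n ≠ m)
    (h : th (G := G) n i * (th n i')⁻¹ = th m k * (th m k')⁻¹) : i = i' ∧ k = k' := by
  by_cases hii : i = i'
  · subst hii
    simp only [mul_inv_cancel] at h
    have h2 : th (G := G) m k = th m k' := by
      rw [← mul_inv_eq_iff_eq_mul] at h
      rw [← inv_inj] at h ⊢
      rw [← h]; group
    exact ⟨rfl, (th_inj h2).2⟩
  · by_cases hkk : k = k'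
    · subst hkk
      simp only [mul_inv_cancel] at h
      exact absurd (th_inj (mul_inv_eq_one.mp h)).2 hii
    · exfalso
      have e1 : Nat.pair n i ≠ Nat.pair n i' := fun hh => hii (Nat.pair_eq_pair.mp hh).2
      have e2 : Nat.pair n i ≠ Nat.pair m k := fun hh => hnm (Nat.pair_eq_pair.mp hh).1
      have e3 : Nat.pair n i ≠ Nat.pair m k' := fun hh => hnm (Nat.pair_eq_pair.mp hh).1
      have e4 : Nat.pair n i' ≠ Nat.pair m k := fun hh => hnm (Nat.pair_eq_pair.mp hh).1
      have e5 : Nat.pair n i' ≠ Nat.pair m k' := fun hh => hnm (Nat.pair_eq_pair.mp hh).1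
      have e6 : Nat.pair m k ≠ Nat.pair m k' := fun hh => hkk (Nat.pair_eq_pair.mp hh).2
      exact L0 (by omega) (by omega) (by omega) (by omega) (by omega) (by omega) h

/-- Blocks decompose uniquely (auxiliary, asymmetric version). -/
lemma decomp_aux {j j' i i' : ℕ} (hij : i ≤ lvl j) (hij' : i' ≤ lvl j') (hlt : j' < j) :
    th (G := G) (lvl j) i * xx j ≠ th (lvl j') i' * xx j' := by
  intro h
  have h2 : xx (G := G) j = (th (lvl j) i)⁻¹ * (th (lvl j') i' * xx j') := by
    rw [← h, inv_mul_cancel_left]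
  refine u_ne_word (G := G) (k := 2 * Nat.pair j j + 1)
    (letter_th_inv (lvl_le j) (le_trans hij (lvl_le j)))
    (letter_th (le_trans (lvl_le j') (le_of_lt hlt)) (le_trans hij' (le_trans (lvl_le j') (le_of_lt hlt))))
    (letter_xx hlt) (Letter.one _) (Letter.one _) (Letter.one _) (Letter.one _) ?_
  show xx (G := G) j = _
  rw [h2]; group

/-- Unique decomposition of elements of `bigA`. -/
lemma decomp {j j' i i' : ℕ} (hij : i ≤ lvl j) (hij' : i' ≤ lvl j')
    (h : th (G := G) (lvl j) i * xx j = th (lvl j') i' * xx j') : j = j' ∧ i = i' := by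
  rcases Nat.lt_trichotomy j j' with hlt | rfl | hlt
  · exact absurd h.symm (decomp_aux hij' hij hlt)
  · refine ⟨rfl, ?_⟩
    have h2 := mul_right_cancel h
    exact (th_inj h2).2
  · exact absurd h (decomp_aux hij hij' hlt)


/-- Two "cross-block" solutions for the same `s` cannot have unboundedly large indices. -/
lemma cross_bound {s : G} {j1 j1' i1 i1' j j' i i' : ℕ}
    (h1i : i1 ≤ lvl j1) (h1i' : i1' ≤ lvl j1') (hii : i ≤ lvl j) (hii' : i' ≤ lvl j')
    (hne : j ≠ j')
    (e1 : s⁻¹ * (th (lvl j1) i1 * xx j1) = th (G := G) (lvl j1') i1' * xx j1')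
    (e2 : s⁻¹ * (th (lvl j) i * xx j) = th (lvl j') i' * xx j')
    (hmax : max j1 j1' < max j j') : False := by
  have hs : s⁻¹ = th (lvl j1') i1' * xx j1' * (xx j1)⁻¹ * (th (lvl j1) i1)⁻¹ := by
    rw [← e1]; group
  rcases Nat.lt_or_ge j j' with hjj | hjj
  · -- j < j', the maximal index is j'
    have hj1 : j1 < j' := by omega
    have hj1' : j1' < j' := by omega
    have key : xx (G := G) j' = (th (lvl j') i')⁻¹ * (s⁻¹ * (th (lvl j) i * xx j)) := by
      rw [e2, inv_mul_cancel_left]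
    refine u_ne_word (G := G) (k := 2 * Nat.pair j' j' + 1)
      (letter_th_inv (lvl_le j') (le_trans hii' (lvl_le j')))
      (letter_th (le_trans (lvl_le j1') (le_of_lt hj1')) (le_trans h1i' (le_trans (lvl_le j1') (le_of_lt hj1'))))
      (letter_xx hj1') (letter_xx_inv hj1)
      (letter_th_inv (le_trans (lvl_le j1) (le_of_lt hj1)) (le_trans h1i (le_trans (lvl_le j1) (le_of_lt hj1))))
      (letter_th (le_trans (lvl_le j) (le_of_lt hjj)) (le_trans hii (le_trans (lvl_le j) (le_of_lt hjj))))
      (letter_xx hjj) ?_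
    show xx (G := G) j' = _
    rw [key, hs]; group
  · -- j' < j, the maximal index is j
    have hjj' : j' < j := lt_of_le_of_ne hjj (Ne.symm hne)
    have hj1 : j1 < j := by omega
    have hj1' : j1' < j := by omega
    have e2' : th (G := G) (lvl j) i * xx j = s * (th (lvl j') i' * xx j') := by
      rw [← e2]; group
    have key : xx (G := G) j = (th (lvl j) i)⁻¹ * (s * (th (lvl j') i' * xx j')) := by
      rw [← e2', inv_mul_cancel_left]
    have hs2 : s = (th (lvl j1') i1' * xx j1' * (xx j1)⁻¹ * (th (lvl j1) i1)⁻¹)⁻¹ := by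
      rw [← hs]; group
    refine u_ne_word (G := G) (k := 2 * Nat.pair j j + 1)
      (letter_th_inv (lvl_le j) (le_trans hii (lvl_le j)))
      (letter_th (le_trans (lvl_le j1) (le_of_lt hj1)) (le_trans h1i (le_trans (lvl_le j1) (le_of_lt hj1))))
      (letter_xx hj1) (letter_xx_inv hj1')
      (letter_th_inv (le_trans (lvl_le j1') (le_of_lt hj1')) (le_trans h1i' (le_trans (lvl_le j1') (le_of_lt hj1'))))
      (letter_th (le_trans (lvl_le j') (le_of_lt hjj')) (le_trans hii' (le_trans (lvl_le j') (le_of_lt hjj'))))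
      (letter_xx hjj') ?_
    show xx (G := G) j = _
    rw [key, hs2]; group

/-- The set of elements of `bigA` that witness a cross-block representation for `s`. -/
def CrossSet (s : G) : Set G :=
  {a | ∃ j j' i i', i ≤ lvl j ∧ i' ≤ lvl j' ∧ j ≠ j' ∧
    a = th (lvl j) i * xx j ∧ s⁻¹ * a = th (lvl j') i' * xx j'}

lemma crossSet_finite (s : G) : (CrossSet (G := G) s).Finite := by
  by_cases hne : (CrossSet (G := G) s).Nonempty
  · obtain ⟨a0, j1, j1', i1, i1', h1, h1', hne1, ha0, hb0⟩ := hne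
    subst ha0
    refine Set.Finite.subset (Set.Finite.image
      (fun p : ℕ × ℕ => th (lvl p.1) p.2 * xx p.1)
      ((Set.finite_Iic (max j1 j1')).prod (Set.finite_Iic (max j1 j1')))) ?_
    rintro a ⟨j, j', i, i', hi, hi', hjj, rfl, hb⟩
    have hmax : max j j' ≤ max j1 j1' := by
      by_contra hc
      push_neg at hc
      exact cross_bound h1 h1' hi hi' hjj hb0 hb hc
    exact ⟨(j, i), ⟨by simp; omega, by
      simp only [Set.mem_Iic]
      exact le_trans hi (le_trans (lvl_le j) (by omega))⟩, rfl⟩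
  · rw [Set.not_nonempty_iff_eq_empty] at hne
    rw [hne]
    exact Set.finite_empty

/-- If `a ∈ A ∩ s•A` is not a cross witness, then `s` lies in some quotient set. -/
lemma same_block {s a : G} (ha : a ∈ bigA G) (hb : s⁻¹ * a ∈ bigA G)
    (hc : a ∉ CrossSet s) :
    ∃ j i i', i ≤ lvl j ∧ i' ≤ lvl j ∧ a = th (lvl j) i * xx j ∧
      s = th (lvl j) i * (th (lvl j) i')⁻¹ := by
  obtain ⟨j, i, hi, rfl⟩ := ha
  obtain ⟨j', i', hi', hb'⟩ := hb
  by_cases hjj : j = j'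
  · subst hjj
    refine ⟨j, i, i', hi, hi', rfl, ?_⟩
    have h2 : s = (th (lvl j) i * xx j) * (th (lvl j) i' * xx j)⁻¹ := by
      rw [← hb']; group
    rw [h2]; group
  · exact absurd ⟨j, j', i, i', hi, hi', hjj, rfl, hb'⟩ hc

/-- `s` belongs to the `n`-th quotient set. -/
def QP (s : G) (n : ℕ) : Prop :=
  ∃ i i', i ≤ n ∧ i' ≤ n ∧ s = th n i * (th n i')⁻¹

lemma qp_unique {s : G} {n m : ℕ} (hs : s ≠ 1) (h1 : QP s n) (h2 : QP s m) : n = m := by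
  obtain ⟨i, i', hi, hi', e1⟩ := h1
  obtain ⟨k, k', hk, hk', e2⟩ := h2
  by_contra hnm
  obtain ⟨hii, -⟩ := th_q_eq hnm (e1.symm.trans e2)
  apply hs
  rw [e1, hii, mul_inv_cancel]

lemma qp_of_infinite {s : G} (hs : (bigA G ∩ s • bigA G).Infinite) : ∃ n, QP s n := by
  obtain ⟨a, ha, hcross⟩ := (hs.diff (crossSet_finite s)).nonempty
  obtain ⟨haA, haS⟩ := ha
  have hb : s⁻¹ * a ∈ bigA G := by
    rwa [Set.mem_smul_set_iff_inv_smul_mem, smul_eq_mul] at haS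
  obtain ⟨j, i, i', hi, hi', -, he⟩ := same_block haA hb hcross
  exact ⟨lvl j, i, i', hi, hi', he⟩

lemma translate_infinite {g g' : G} {A : Set G} (h : (g • A ∩ g' • A).Infinite) :
    (A ∩ (g⁻¹ * g') • A).Infinite := by
  have h2 : (g • (A ∩ (g⁻¹ * g') • A) : Set G) = g • A ∩ g' • A := by
    rw [Set.smul_set_inter, smul_smul, mul_inv_cancel_left]
  rw [← h2] at h
  exact Set.infinite_smul_set.mp h

lemma translate_infinite3 {g g₁ g₂ : G} {A : Set G}
    (h : (g • A ∩ (g₁ • A ∩ g₂ • A)).Infinite) :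
    (A ∩ ((g⁻¹ * g₁) • A ∩ (g⁻¹ * g₂) • A)).Infinite := by
  have h2 : (g • (A ∩ ((g⁻¹ * g₁) • A ∩ (g⁻¹ * g₂) • A)) : Set G)
      = g • A ∩ (g₁ • A ∩ g₂ • A) := by
    rw [Set.smul_set_inter, Set.smul_set_inter, smul_smul, smul_smul,
      mul_inv_cancel_left, mul_inv_cancel_left]
  rw [← h2] at h
  exact Set.infinite_smul_set.mp h


/-- `bigA` is not `n`-thin for any `n`. -/
theorem not_nthin (n : ℕ) : ¬ NThin (bigA G) n := by
  intro h
  have hinj : Function.Injective (fun i : Fin (n + 1) => (th (G := G) n (i : ℕ))⁻¹) := by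
    intro a b hab
    simp only [inv_inj] at hab
    exact Fin.ext (th_inj hab).2
  have hfin := h _ hinj
  have hsub : Set.range (fun k => xx (G := G) (Nat.pair n k)) ⊆
      ⋂ i : Fin (n + 1), (th (G := G) n (i : ℕ))⁻¹ • bigA G := by
    rintro x ⟨k, rfl⟩
    refine Set.mem_iInter.2 fun i => ?_
    rw [Set.mem_smul_set_iff_inv_smul_mem, inv_inv, smul_eq_mul]
    refine ⟨Nat.pair n k, i, ?_, ?_⟩
    · rw [lvl_pair]; exact Nat.lt_succ_iff.mp i.isLt
    · rw [lvl_pair]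
  have hrange : (Set.range fun k => xx (G := G) (Nat.pair n k)).Infinite := by
    apply Set.infinite_range_of_injective
    intro a b hab
    have := xx_inj hab
    exact (Nat.pair_eq_pair.mp this).2
  exact (hrange.mono hsub) hfin

/-- `bigA` is sparse. -/
theorem sparse_bigA : Sparse (bigA G) := by
  classical
  intro X hX
  by_cases hp : ∃ g ∈ X, ∃ g' ∈ X, g ≠ g' ∧ (g • bigA G ∩ g' • bigA G).Finite
  · obtain ⟨g, hg, g', hg', hne, hfin⟩ := hp
    refine ⟨{g, g'}, ⟨g, by simp⟩, ?_, ?_⟩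
    · intro x hx
      simp only [Finset.coe_insert, Finset.coe_singleton, Set.mem_insert_iff,
        Set.mem_singleton_iff] at hx
      rcases hx with rfl | rfl <;> assumption
    · have heq : (⋂ x ∈ ({g, g'} : Finset G), x • bigA G) = g • bigA G ∩ g' • bigA G := by
        ext y
        simp only [Set.mem_iInter, Finset.mem_insert, Finset.mem_singleton, Set.mem_inter_iff]
        constructor
        · intro hy; exact ⟨hy g (Or.inl rfl), hy g' (Or.inr rfl)⟩
        · rintro ⟨h1, h2⟩ x (rfl | rfl) <;> assumption
      rw [heq]; exact hfin
  · push_neg at hp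
    obtain ⟨g₀, hg₀⟩ := hX.nonempty
    have key : ∀ g, g ∈ X → g ≠ g₀ →
        ∃ n, QP (g₀⁻¹ * g) n ∧ ∀ m, QP (g₀⁻¹ * g) m → m = n := by
      intro g hg hne
      have h1 := hp g₀ hg₀ g hg (Ne.symm hne)
      have h2 : (bigA G ∩ (g₀⁻¹ * g) • bigA G).Infinite := translate_infinite h1
      obtain ⟨n, hn⟩ := qp_of_infinite h2
      have hs1 : g₀⁻¹ * g ≠ 1 := fun hh => hne (inv_mul_eq_one.mp hh).symm
      exact ⟨n, hn, fun m hm => qp_unique hs1 hm hn⟩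
    choose! nf hnf hnfu using key
    have hX' : (X \ {g₀} : Set G).Infinite := hX.diff (Set.finite_singleton g₀)
    have hex : ∃ g₁ ∈ X \ {g₀}, ∃ g₂ ∈ X \ {g₀}, nf g₁ ≠ nf g₂ := by
      by_contra hcon
      push_neg at hcon
      obtain ⟨g₁, hg₁⟩ := hX'.nonempty
      apply hX'
      have hsub : (X \ {g₀} : Set G) ⊆
          (fun p : ℕ × ℕ => g₀ * (th (nf g₁) p.1 * (th (nf g₁) p.2)⁻¹)) ''
            (Set.Iic (nf g₁) ×ˢ Set.Iic (nf g₁)) := by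
        rintro g ⟨hgX, hgne⟩
        have hne' : g ≠ g₀ := by simpa using hgne
        obtain ⟨i, i', hi, hi', he⟩ := hnf g hgX hne'
        have hEq : nf g = nf g₁ := hcon g ⟨hgX, hgne⟩ g₁ hg₁
        rw [hEq] at hi hi' he
        refine ⟨(i, i'), ⟨hi, hi'⟩, ?_⟩
        show g₀ * (th (nf g₁) i * (th (nf g₁) i')⁻¹) = g
        rw [← he]; group
      exact Set.Finite.subset (Set.Finite.image _
        ((Set.finite_Iic _).prod (Set.finite_Iic _))) hsub
    obtain ⟨g₁, hg₁, g₂, hg₂, hn12⟩ := hex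
    have hg₁X : g₁ ∈ X := hg₁.1
    have hg₂X : g₂ ∈ X := hg₂.1
    have hg₁ne : g₁ ≠ g₀ := by simpa using hg₁.2
    have hg₂ne : g₂ ≠ g₀ := by simpa using hg₂.2
    refine ⟨{g₀, g₁, g₂}, ⟨g₀, by simp⟩, ?_, ?_⟩
    · intro x hx
      simp only [Finset.coe_insert, Finset.coe_singleton, Set.mem_insert_iff,
        Set.mem_singleton_iff] at hx
      rcases hx with rfl | rfl | rfl <;> assumption
    · have heq : (⋂ x ∈ ({g₀, g₁, g₂} : Finset G), x • bigA G) =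
          g₀ • bigA G ∩ (g₁ • bigA G ∩ g₂ • bigA G) := by
        ext y
        simp only [Set.mem_iInter, Finset.mem_insert, Finset.mem_singleton, Set.mem_inter_iff]
        constructor
        · intro hy
          exact ⟨hy g₀ (Or.inl rfl), hy g₁ (Or.inr (Or.inl rfl)), hy g₂ (Or.inr (Or.inr rfl))⟩
        · rintro ⟨h1, h2, h3⟩ x (rfl | rfl | rfl) <;> assumption
      rw [heq]
      by_contra hinf
      have hinf' : (g₀ • bigA G ∩ (g₁ • bigA G ∩ g₂ • bigA G)).Infinite := hinf
      have h3 : (bigA G ∩ ((g₀⁻¹ * g₁) • bigA G ∩ (g₀⁻¹ * g₂) • bigA G)).Infinite :=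
        translate_infinite3 hinf'
      obtain ⟨a, ha, hac⟩ := (h3.diff ((crossSet_finite (g₀⁻¹ * g₁)).union
        (crossSet_finite (g₀⁻¹ * g₂)))).nonempty
      obtain ⟨haA, ha1, ha2⟩ := ha
      rw [Set.mem_union] at hac
      push_neg at hac
      have hb1 : (g₀⁻¹ * g₁)⁻¹ * a ∈ bigA G := by
        rwa [Set.mem_smul_set_iff_inv_smul_mem, smul_eq_mul] at ha1
      have hb2 : (g₀⁻¹ * g₂)⁻¹ * a ∈ bigA G := by
        rwa [Set.mem_smul_set_iff_inv_smul_mem, smul_eq_mul] at ha2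
      obtain ⟨j, i, i', hi, hi', hdec, he1⟩ := same_block haA hb1 hac.1
      obtain ⟨j', kk, kk', hk, hk', hdec', he2⟩ := same_block haA hb2 hac.2
      have hjj : j = j' := (decomp hi hk (hdec.symm.trans hdec')).1
      have q1 : QP (g₀⁻¹ * g₁) (lvl j) := ⟨i, i', hi, hi', he1⟩
      have q2 : QP (g₀⁻¹ * g₂) (lvl j) := by
        rw [hjj]; exact ⟨kk, kk', hk, hk', he2⟩
      have e1 := hnfu g₁ hg₁X hg₁ne (lvl j) q1
      have e2 := hnfu g₂ hg₂X hg₂ne (lvl j) q2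
      exact hn12 (e1.symm.trans e2)

/-- Every finitely thin set is sparse. -/
theorem ft_sparse {A : Set G} (h : ∃ n, NThin A n) : Sparse A := by
  obtain ⟨n, hn⟩ := h
  intro X hX
  obtain ⟨F, hFX, hcard⟩ := hX.exists_subset_card_eq (n + 1)
  refine ⟨F, by rw [← Finset.card_pos, hcard]; omega, hFX, ?_⟩
  set e : Fin (n + 1) → G := fun i => (F.equivFin.symm (finCongr hcard.symm i) : G) with he
  have hinj : Function.Injective e :=
    Subtype.coe_injective.comp (F.equivFin.symm.injective.comp (finCongr hcard.symm).injective)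
  have hsub : (⋂ g ∈ F, g • A) ⊆ ⋂ i, e i • A := by
    refine Set.subset_iInter fun i => ?_
    intro x hx
    exact Set.mem_iInter₂.mp hx (e i) (F.equivFin.symm (finCongr hcard.symm i)).2
  exact (hn e hinj).subset hsub

end FTSP

/-- Theorem 3.4: every infinite group has a sparse subset that is not `n`-thin for
any `n`; hence `FT_G ⊂ Sp_G` strictly. -/
theorem ft_strict_subset_sp (G : Type*) [Group G] [Infinite G] :
    (∃ A : Set G, Sparse A ∧ ∀ n : ℕ, ¬ NThin A n) ∧
    {A : Set G | ∃ n : ℕ, NThin A n} ⊂ {A : Set G | Sparse A} := by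
  refine ⟨⟨FTSP.bigA G, FTSP.sparse_bigA, fun n => FTSP.not_nthin n⟩, ?_, ?_⟩
  · intro A hA
    exact FTSP.ft_sparse hA
  · intro hc
    obtain ⟨n, hn⟩ := hc (show FTSP.bigA G ∈ {A : Set G | Sparse A} from FTSP.sparse_bigA)
    exact FTSP.not_nthin n hn
end

section
/- If A and B are subsets of a group G having bounded rectangles, then A ∪ B has bounded rectangles; hence BR_G is closed under finite unions. (Proof uses the bipartite Ramsey theorem.) -/
open Pointwise

/-- `A` has *bounded rectangles* if for some `n` it contains no `(n,n)`-rectangle. -/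
def HasBoundedRectangles {G : Type*} [Group G] (A : Set G) : Prop :=
  ∃ n : ℕ, ¬ ∃ X Y : Finset G, X.card = n ∧ Y.card = n ∧
    (X : Set G) * (Y : Set G) ⊆ A

/-!
Fix `2n` elements of the row set `X`. Each column `y ∈ Y` induces the pattern
`{x | x * y ∈ A}` on these rows; once `|Y| > 2^(2n) (n - 1)`, some pattern `S` is shared by `n`
columns. Either `S` or its complement among the rows has `n` elements, giving an `(n,n)`-rectangle
inside `A` or inside `(A ∪ B) \ A ⊆ B`.
-/

open Finset

namespace Finset

variable {α β : Type*} (r : α → β → Prop) {s : Finset α} {t : Finset β} {n : ℕ}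

theorem exists_common_row_pattern_of_mul_lt_card (ht : 2 ^ #s * (n - 1) < #t) :
    ∃ S ⊆ s, ∃ t' ⊆ t, n ≤ #t' ∧ ∀ y ∈ t', ∀ x ∈ s, r x y ↔ x ∈ S := by
  classical
  let pattern : β → Finset α := fun y => s.filter (r · y)
  have hmaps : ∀ y ∈ t, pattern y ∈ s.powerset := fun y _ =>
    mem_powerset.mpr (filter_subset _ _)
  obtain ⟨S, hS, hfiber⟩ := exists_lt_card_fiber_of_mul_lt_card_of_maps_to hmaps
    (by rwa [card_powerset])
  refine ⟨S, mem_powerset.mp hS, t.filter (pattern · = S), filter_subset _ _, by omega, ?_⟩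
  rintro y hy x hx
  rw [← (mem_filter.mp hy).2, mem_filter]
  exact ⟨fun h => ⟨hx, h⟩, And.right⟩

/-- Bipartite Ramsey theorem for two colours. -/
theorem exists_rectangle_forall_or_forall_not (hs : 2 * n ≤ #s + 1)
    (ht : 2 ^ #s * (n - 1) < #t) :
    ∃ s' ⊆ s, ∃ t' ⊆ t, n ≤ #s' ∧ n ≤ #t' ∧
      ((∀ x ∈ s', ∀ y ∈ t', r x y) ∨ ∀ x ∈ s', ∀ y ∈ t', ¬ r x y) := by
  classical
  obtain ⟨S, hSs, t', ht't, ht'n, hpattern⟩ := exists_common_row_pattern_of_mul_lt_card r ht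
  have hsplit : #(s \ S) + #S = #s := card_sdiff_add_card_eq_card hSs
  by_cases hSn : n ≤ #S
  · exact ⟨S, hSs, t', ht't, hSn, ht'n,
      Or.inl fun x hx y hy => (hpattern y hy x (hSs hx)).mpr hx⟩
  · refine ⟨s \ S, sdiff_subset, t', ht't, by omega, ht'n, Or.inr fun x hx y hy => ?_⟩
    obtain ⟨hxs, hxS⟩ := mem_sdiff.mp hx
    exact fun hr => hxS ((hpattern y hy x hxs).mp hr)

end Finset

theorem exists_card_eq_rectangle_of_le {G : Type*} [Mul G] {A : Set G} {m : ℕ}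
    {X Y : Finset G} (hX : m ≤ #X) (hY : m ≤ #Y) (h : ∀ x ∈ X, ∀ y ∈ Y, x * y ∈ A) :
    ∃ X' Y' : Finset G, #X' = m ∧ #Y' = m ∧ (X' : Set G) * (Y' : Set G) ⊆ A := by
  obtain ⟨X', hX'X, hX'⟩ := exists_subset_card_eq hX
  obtain ⟨Y', hY'Y, hY'⟩ := exists_subset_card_eq hY
  exact ⟨X', Y', hX', hY', Set.mul_subset_iff.mpr fun x hx y hy => h x (hX'X hx) y (hY'Y hy)⟩

/-- If `A` and `B` have bounded rectangles then so does `A ∪ B`. -/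
theorem br_union {G : Type*} [Group G] (A B : Set G)
    (hA : HasBoundedRectangles A) (hB : HasBoundedRectangles B) :
    HasBoundedRectangles (A ∪ B) := by
  obtain ⟨a, ha⟩ := hA
  obtain ⟨b, hb⟩ := hB
  set n := max a b + 1
  have hpow : 2 ≤ 2 ^ (2 * n) := Nat.le_self_pow (by omega) 2
  refine ⟨n * 2 ^ (2 * n), fun ⟨X, Y, hX, hY, hXY⟩ => ?_⟩
  obtain ⟨X₀, hX₀X, hX₀⟩ := exists_subset_card_eq (s := X) (n := 2 * n)
    (hX ▸ (Nat.mul_le_mul_right n hpow).trans_eq (mul_comm _ _))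
  obtain ⟨s, hs, t, ht, hsn, htn, hinA | hnotinA⟩ :=
    exists_rectangle_forall_or_forall_not (fun x y => x * y ∈ A) (s := X₀) (t := Y) (n := n)
      (by omega)
      (by rw [hX₀, hY, mul_comm]; exact Nat.mul_lt_mul_of_pos_right (by omega) (by omega))
  · exact ha (exists_card_eq_rectangle_of_le (X := s) (Y := t) (by omega) (by omega) hinA)
  · refine hb (exists_card_eq_rectangle_of_le (X := s) (Y := t) (by omega) (by omega)
      fun x hx y hy => ?_)
    have hxy : x * y ∈ A ∪ B := Set.mul_subset_iff.mp hXY x (hX₀X (hs hx)) y (ht hy)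
    exact hxy.resolve_left (hnotinA x hx y hy)
end

section
/- Every infinite group G contains a thin subset that is not in BR_G; i.e., there exists a thin subset A of G containing (n,n)-rectangles for every n ∈ ℕ. Hence BR_G is strictly contained in FT_G. -/
open Pointwise

section Construction

variable {G : Type*} [Group G] [Infinite G]

open scoped Classical

set_option linter.unusedSectionVars false

lemma exists_avoid (s : Set G) (hs : s.Finite) : ∃ x : G, x ∉ s :=
  hs.infinite_compl.nonempty

lemma lemL1 (F : Set G) (hF : F.Finite) (n : ℕ) :
    ∃ X : Finset G, X.card = n ∧ ∀ x ∈ X, ∀ x' ∈ X, x * x'⁻¹ ∈ F → x = x' := by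
  induction n with
  | zero => exact ⟨∅, rfl, by simp⟩
  | succ n ih =>
    obtain ⟨X, hcard, hX⟩ := ih
    obtain ⟨x, hx⟩ := exists_avoid ((X : Set G) ∪ F * (X : Set G) ∪ F⁻¹ * (X : Set G))
      ((X.finite_toSet.union (hF.mul X.finite_toSet)).union (hF.inv.mul X.finite_toSet))
    have hxX : x ∉ X := fun h => hx (Or.inl (Or.inl h))
    refine ⟨insert x X, by rw [Finset.card_insert_of_notMem hxX, hcard], ?_⟩
    intro a ha b hb hab
    rcases Finset.mem_insert.1 ha with rfl | ha2 <;> rcases Finset.mem_insert.1 hb with rfl | hb2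
    · rfl
    · exfalso
      apply hx
      refine Or.inl (Or.inr ?_)
      have := Set.mul_mem_mul hab (Finset.mem_coe.2 hb2)
      simpa using this
    · exfalso
      apply hx
      refine Or.inr ?_
      have h1 : (a * b⁻¹)⁻¹ ∈ F⁻¹ := Set.inv_mem_inv.2 hab
      have := Set.mul_mem_mul h1 (Finset.mem_coe.2 ha2)
      have he : (a * b⁻¹)⁻¹ * a = b := by group
      rwa [he] at this
    · exact hX a ha2 b hb2 hab

lemma lemL2 (F C : Set G) (hF : F.Finite) (hC : C.Finite) (X : Finset G) (m : ℕ) :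
    ∃ Y : Finset G, Y.card = m ∧
      (∀ y ∈ Y, ∀ y' ∈ Y, y ≠ y' → ∀ x ∈ X, ∀ x' ∈ X, x * y * (x' * y')⁻¹ ∉ F) ∧
      (∀ y ∈ Y, ∀ x ∈ X, ∀ c ∈ C, x * y * c⁻¹ ∉ F) := by
  induction m with
  | zero => exact ⟨∅, rfl, by simp, by simp⟩
  | succ m ih =>
    obtain ⟨Y, hcard, h1, h2⟩ := ih
    have hXf : ((X : Set G)⁻¹).Finite := X.finite_toSet.inv
    have hbadf : ((Y : Set G) ∪ (X : Set G)⁻¹ * F * (X : Set G) * (Y : Set G)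
        ∪ (X : Set G)⁻¹ * F⁻¹ * (X : Set G) * (Y : Set G)
        ∪ (X : Set G)⁻¹ * F * C).Finite := by
      refine (((Y.finite_toSet.union ?_).union ?_).union ?_)
      · exact ((hXf.mul hF).mul X.finite_toSet).mul Y.finite_toSet
      · exact ((hXf.mul hF.inv).mul X.finite_toSet).mul Y.finite_toSet
      · exact (hXf.mul hF).mul hC
    obtain ⟨y, hy⟩ := exists_avoid _ hbadf
    have hyY : y ∉ Y := fun h => hy (Or.inl (Or.inl (Or.inl h)))
    refine ⟨insert y Y, by rw [Finset.card_insert_of_notMem hyY, hcard], ?_, ?_⟩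
    · intro a ha b hb hne x hxm x' hx'm habs
      rcases Finset.mem_insert.1 ha with rfl | ha2 <;> rcases Finset.mem_insert.1 hb with rfl | hb2
      · exact hne rfl
      · -- a = y new, b = y' old
        apply hy
        refine Or.inl (Or.inl (Or.inr ?_))
        have h1m : (x : G)⁻¹ ∈ (X : Set G)⁻¹ := Set.inv_mem_inv.2 (Finset.mem_coe.2 hxm)
        have := Set.mul_mem_mul (Set.mul_mem_mul (Set.mul_mem_mul h1m habs)
          (Finset.mem_coe.2 hx'm)) (Finset.mem_coe.2 hb2)
        have he : x⁻¹ * (x * a * (x' * b)⁻¹) * x' * b = a := by group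
        rwa [he] at this
      · -- b = y new, a old
        apply hy
        refine Or.inl (Or.inr ?_)
        have h1m : (x' : G)⁻¹ ∈ (X : Set G)⁻¹ := Set.inv_mem_inv.2 (Finset.mem_coe.2 hx'm)
        have h2m : (x * a * (x' * b)⁻¹)⁻¹ ∈ F⁻¹ := Set.inv_mem_inv.2 habs
        have := Set.mul_mem_mul (Set.mul_mem_mul (Set.mul_mem_mul h1m h2m)
          (Finset.mem_coe.2 hxm)) (Finset.mem_coe.2 ha2)
        have he : x'⁻¹ * (x * a * (x' * b)⁻¹)⁻¹ * x * a = b := by group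
        rwa [he] at this
      · exact h1 a ha2 b hb2 hne x hxm x' hx'm habs
    · intro a ha x hxm c hc habs
      rcases Finset.mem_insert.1 ha with rfl | ha2
      · apply hy
        refine Or.inr ?_
        have h1m : (x : G)⁻¹ ∈ (X : Set G)⁻¹ := Set.inv_mem_inv.2 (Finset.mem_coe.2 hxm)
        have := Set.mul_mem_mul (Set.mul_mem_mul h1m habs) hc
        have he : x⁻¹ * (x * a * c⁻¹) * c = a := by group
        rwa [he] at this
      · exact h2 a ha2 x hxm c hc habs

lemma lemL (C : Set G) (hC : C.Finite) (n : ℕ) :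
    ∃ X Y : Finset G, X.card = n ∧ Y.card = n ∧
      ∀ a ∈ (X : Set G) * (Y : Set G), ∀ b ∈ (X : Set G) * (Y : Set G) ∪ C,
        a * b⁻¹ ∈ C * C⁻¹ → a = b := by
  have hF : (C * C⁻¹).Finite := hC.mul hC.inv
  obtain ⟨X, hXcard, hX⟩ := lemL1 (C * C⁻¹) hF n
  obtain ⟨Y, hYcard, h1, h2⟩ := lemL2 (C * C⁻¹) C hF hC X n
  refine ⟨X, Y, hXcard, hYcard, ?_⟩
  rintro a ha b hb hmem
  rw [Set.mem_mul] at ha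
  obtain ⟨x, hx, y, hy, rfl⟩ := ha
  rcases hb with hb | hb
  · rw [Set.mem_mul] at hb
    obtain ⟨x', hx', y', hy', rfl⟩ := hb
    by_cases hyy : y = y'
    · subst hyy
      have he : x * y * (x' * y)⁻¹ = x * x'⁻¹ := by group
      rw [he] at hmem
      rw [hX x (Finset.mem_coe.1 hx) x' (Finset.mem_coe.1 hx') hmem]
    · exact absurd hmem (h1 y (Finset.mem_coe.1 hy) y' (Finset.mem_coe.1 hy') hyy
        x (Finset.mem_coe.1 hx) x' (Finset.mem_coe.1 hx'))
  · exact absurd hmem (h2 y (Finset.mem_coe.1 hy) x (Finset.mem_coe.1 hx) b hb)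

noncomputable def stageXY (C : Set G) (hC : C.Finite) (n : ℕ) : Finset G × Finset G :=
  ⟨(lemL C hC n).choose, (lemL C hC n).choose_spec.choose⟩

lemma stageXY_spec (C : Set G) (hC : C.Finite) (n : ℕ) :
    (stageXY C hC n).1.card = n ∧ (stageXY C hC n).2.card = n ∧
      ∀ a ∈ ((stageXY C hC n).1 : Set G) * ((stageXY C hC n).2 : Set G),
        ∀ b ∈ ((stageXY C hC n).1 : Set G) * ((stageXY C hC n).2 : Set G) ∪ C,
        a * b⁻¹ ∈ C * C⁻¹ → a = b :=
  (lemL C hC n).choose_spec.choose_spec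

noncomputable def Rset (C : Set G) (hC : C.Finite) (n : ℕ) : Set G :=
  ((stageXY C hC n).1 : Set G) * ((stageXY C hC n).2 : Set G)

lemma Rset_finite (C : Set G) (hC : C.Finite) (n : ℕ) : (Rset C hC n).Finite :=
  (stageXY C hC n).1.finite_toSet.mul (stageXY C hC n).2.finite_toSet

noncomputable def Bs : ℕ → {S : Set G // S.Finite}
  | 0 => ⟨∅, Set.finite_empty⟩
  | n + 1 =>
    ⟨(Bs n).1 ∪ Rset (Bs n).1 (Bs n).2 (n + 1),
      (Bs n).2.union (Rset_finite (Bs n).1 (Bs n).2 (n + 1))⟩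

lemma Bs_succ (n : ℕ) : (Bs (n + 1) : {S : Set G // S.Finite}).1 =
    (Bs n).1 ∪ Rset (Bs n).1 (Bs n).2 (n + 1) := by
  rfl

lemma Bs_le {m n : ℕ} (h : m ≤ n) : ((Bs m : {S : Set G // S.Finite})).1 ⊆ (Bs n).1 := by
  induction h with
  | refl => exact subset_rfl
  | step h ih =>
    refine ih.trans ?_
    rw [Bs_succ]
    exact Set.subset_union_left

lemma quot_mono {S T : Set G} (h : S ⊆ T) : S * S⁻¹ ⊆ T * T⁻¹ :=
  Set.mul_subset_mul h (Set.inv_subset_inv.2 h)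

lemma quot_symm {S : Set G} {g : G} (h : g ∈ S * S⁻¹) : g⁻¹ ∈ S * S⁻¹ := by
  rw [Set.mem_mul] at h ⊢
  obtain ⟨x, hx, y, hy, rfl⟩ := h
  rw [Set.mem_inv] at hy
  exact ⟨y⁻¹, hy, x⁻¹, Set.inv_mem_inv.2 hx, by group⟩

lemma key {g : G} (hg : g ≠ 1) (N : ℕ) (hN : g ∈ (Bs N).1 * ((Bs N : {S : Set G // S.Finite})).1⁻¹) :
    ∀ k, ∀ a b : G, a ∈ (Bs (N + k)).1 → b ∈ (Bs (N + k)).1 → a * b⁻¹ = g →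
      a ∈ (Bs N).1 := by
  intro k
  induction k with
  | zero => intro a b ha _ _; exact ha
  | succ k ih =>
    intro a b ha hb heq
    rw [show N + (k + 1) = (N + k) + 1 from rfl, Bs_succ] at ha hb
    have hquot : g ∈ (Bs (N + k)).1 * ((Bs (N + k)).1)⁻¹ :=
      quot_mono (Bs_le (Nat.le_add_right N k)) hN
    have spec := (stageXY_spec (G := G) (Bs (N + k)).1 (Bs (N + k)).2 (N + k + 1)).2.2
    rcases ha with ha | ha
    · rcases hb with hb | hb
      · exact ih a b ha hb heq
      · exfalso
        have hba : b * a⁻¹ = g⁻¹ := by rw [← heq]; group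
        have : b = a := spec b hb a (Or.inr ha) (by rw [hba]; exact quot_symm hquot)
        apply hg
        rw [this] at heq
        simpa using heq.symm
    · exfalso
      have hab : a = b := by
        refine spec a ha b ?_ (by rw [heq]; exact hquot)
        rcases hb with hb | hb
        · exact Or.inr hb
        · exact Or.inl hb
      apply hg
      rw [hab] at heq
      simpa using heq.symm

noncomputable def Aset (G : Type*) [Group G] [Infinite G] : Set G := ⋃ n, (Bs n).1

lemma Aset_thin (g : G) (hg : g ≠ 1) : ((g • Aset G) ∩ Aset G).Finite := by
  by_cases hex : ∃ N, g ∈ (Bs N).1 * ((Bs N : {S : Set G // S.Finite})).1⁻¹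
  · obtain ⟨N, hN⟩ := hex
    refine (Bs N).2.subset ?_
    rintro a ⟨hga, haA⟩
    have hb : g⁻¹ * a ∈ Aset G := by
      have := Set.mem_smul_set_iff_inv_smul_mem.1 hga
      simpa [smul_eq_mul] using this
    obtain ⟨n1, ha1⟩ := Set.mem_iUnion.1 haA
    obtain ⟨n2, hb1⟩ := Set.mem_iUnion.1 hb
    have ha2 : a ∈ (Bs (N + (n1 + n2))).1 := Bs_le (by omega) ha1
    have hb2 : g⁻¹ * a ∈ (Bs (N + (n1 + n2))).1 := Bs_le (by omega) hb1
    exact key hg N hN (n1 + n2) a (g⁻¹ * a) ha2 hb2 (by group)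
  · have hemp : (g • Aset G) ∩ Aset G = ∅ := by
      ext a
      simp only [Set.mem_inter_iff, Set.mem_empty_iff_false, iff_false, not_and]
      intro hga haA
      have hb : g⁻¹ * a ∈ Aset G := by
        have := Set.mem_smul_set_iff_inv_smul_mem.1 hga
        simpa [smul_eq_mul] using this
      obtain ⟨n1, ha1⟩ := Set.mem_iUnion.1 haA
      obtain ⟨n2, hb1⟩ := Set.mem_iUnion.1 hb
      exfalso
      apply hex
      refine ⟨n1 + n2, ?_⟩
      have ha2 : a ∈ (Bs (n1 + n2)).1 := Bs_le (by omega) ha1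
      have hb2 : g⁻¹ * a ∈ (Bs (n1 + n2)).1 := Bs_le (by omega) hb1
      have := Set.mul_mem_mul ha2 (Set.inv_mem_inv.2 hb2)
      have he : a * (g⁻¹ * a)⁻¹ = g := by group
      rwa [he] at this
    rw [hemp]
    exact Set.finite_empty

lemma Aset_rect (n : ℕ) : ∃ X Y : Finset G, X.card = n ∧ Y.card = n ∧
    (X : Set G) * (Y : Set G) ⊆ Aset G := by
  cases n with
  | zero => exact ⟨∅, ∅, rfl, rfl, by simp⟩
  | succ m =>
    obtain ⟨hc1, hc2, _⟩ := stageXY_spec (G := G) (Bs m).1 (Bs m).2 (m + 1)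
    refine ⟨_, _, hc1, hc2, ?_⟩
    intro z hz
    refine Set.mem_iUnion.2 ⟨m + 1, ?_⟩
    rw [Bs_succ]
    exact Or.inr hz

end Construction

/-- Theorem 3.5(iii): every infinite group contains a thin set with `(n,n)`-rectangles
for each `n`; hence `BR_G ⊂ FT_G` strictly. -/
theorem br_strict_subset_ft (G : Type*) [Group G] [Infinite G] :
    (∃ A : Set G, (∀ g : G, g ≠ 1 → ((g • A) ∩ A).Finite) ∧
      ∀ n : ℕ, ∃ X Y : Finset G, X.card = n ∧ Y.card = n ∧
        (X : Set G) * (Y : Set G) ⊆ A) ∧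
    {A : Set G | HasBoundedRectangles A} ⊂ {A : Set G | ∃ n : ℕ, NThin A n} := by
  classical
  constructor
  · exact ⟨Aset G, Aset_thin, Aset_rect⟩
  · rw [Set.ssubset_def]
    constructor
    · rintro A ⟨n, hn⟩
      cases n with
      | zero => exact absurd ⟨∅, ∅, rfl, rfl, by simp⟩ hn
      | succ m =>
        refine ⟨m, fun g hginj => ?_⟩
        by_contra hfin
        have hinf : (⋂ i, g i • A).Infinite := hfin
        obtain ⟨Y, hYsub, hYcard⟩ := hinf.exists_subset_card_eq (m + 1)
        apply hn
        refine ⟨Finset.image (fun i => (g i)⁻¹) Finset.univ, Y, ?_, hYcard, ?_⟩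
        · rw [Finset.card_image_of_injective _ (fun i j h => hginj (inv_injective h)),
            Finset.card_univ, Fintype.card_fin]
        · rintro z hz
          rw [Set.mem_mul] at hz
          obtain ⟨x, hx, y, hy, rfl⟩ := hz
          rw [Finset.mem_coe, Finset.mem_image] at hx
          obtain ⟨i, _, rfl⟩ := hx
          have hyA : y ∈ g i • A := Set.mem_iInter.1 (hYsub hy) i
          have := Set.mem_smul_set_iff_inv_smul_mem.1 hyA
          simpa [smul_eq_mul] using this
    · intro hsub
      have hmem : Aset G ∈ {A : Set G | ∃ n, NThin A n} := by
        refine ⟨1, fun g hginj => ?_⟩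
        have h01 : g 0 ≠ g 1 := fun h => absurd (hginj h) (by decide)
        have hne : (g 0)⁻¹ * g 1 ≠ 1 := fun h => h01 (inv_mul_eq_one.1 h)
        have hfin := Aset_thin ((g 0)⁻¹ * g 1) hne
        refine (hfin.smul_set (a := g 0)).subset ?_
        intro a ha
        have ha0 := Set.mem_iInter.1 ha 0
        have ha1 := Set.mem_iInter.1 ha 1
        obtain ⟨z, hz, rfl⟩ := ha1
        refine Set.mem_smul_set.2 ⟨((g 0)⁻¹ * g 1) • z, ⟨⟨z, hz, rfl⟩, ?_⟩, ?_⟩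
        · have := Set.mem_smul_set_iff_inv_smul_mem.1 ha0
          simpa [mul_smul, mul_assoc] using this
        · rw [smul_smul]
          simp
      have hnot : Aset G ∉ {A : Set G | HasBoundedRectangles A} := by
        rintro ⟨n, hn⟩
        exact hn (Aset_rect n)
      exact hnot (hsub hmem)
end

section
/- Let G be the direct sum ⊕_ω ℤ₂ and A = {g ∈ G : supt(g) = 1}, where supt(g) is the number of nonzero coordinates of g. If S ⊆ G is such that there exists m ∈ ℕ with supt(g) ≤ m for all g ∈ S, then S contains no FP-set: there is no injective sequence (g_n) in G with all finite products g_{i₁}·g_{i₂}⋯g_{i_n} (i₁ < i₂ < ⋯ < i_n) belonging to S. -/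
/-- If every element of `S ⊆ ⊕_ω ℤ₂` has support of size at most `m`, then `S`
contains no FP-set. -/
theorem bounded_support_no_FP (S : Set (ℕ →₀ ZMod 2)) (m : ℕ)
    (hS : ∀ g ∈ S, g.support.card ≤ m) :
    ¬ ∃ g : ℕ → (ℕ →₀ ZMod 2), Function.Injective g ∧
      ∀ s : Finset ℕ, s.Nonempty → (∑ i ∈ s, g i) ∈ S := by
  rintro ⟨g, hg, hsum⟩
  -- values add to zero (characteristic 2)
  have hself : ∀ x : (ℕ →₀ ZMod 2), x + x = 0 := by
    intro x
    ext a
    have : ∀ b : ZMod 2, b + b = 0 := by decide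
    simp [this]
  -- the set of all finite subset sums (a subgroup)
  set H : Set (ℕ →₀ ZMod 2) := {h | ∃ s : Finset ℕ, h = ∑ i ∈ s, g i} with hH
  have hHbound : ∀ h ∈ H, h.support.card ≤ m := by
    rintro h ⟨s, rfl⟩
    rcases s.eq_empty_or_nonempty with rfl | hs
    · simp
    · exact hS _ (hsum s hs)
  have hadd : ∀ h₁ ∈ H, ∀ h₂ ∈ H, h₁ + h₂ ∈ H := by
    rintro _ ⟨s, rfl⟩ _ ⟨t, rfl⟩
    refine ⟨symmDiff s t, ?_⟩
    have h1 : (∑ i ∈ symmDiff s t, g i) + ∑ i ∈ s ∩ t, g i = ∑ i ∈ s ∪ t, g i := by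
      rw [show s ∩ t = s ⊓ t from rfl, ← Finset.sum_union (disjoint_symmDiff_inf s t)]
      congr 1
      rw [show s ∪ t = s ⊔ t from rfl]
      exact symmDiff_sup_inf s t
    have h2 : (∑ i ∈ s ∪ t, g i) + ∑ i ∈ s ∩ t, g i = (∑ i ∈ s, g i) + ∑ i ∈ t, g i :=
      Finset.sum_union_inter
    calc (∑ i ∈ s, g i) + ∑ i ∈ t, g i
        = (∑ i ∈ s ∪ t, g i) + ∑ i ∈ s ∩ t, g i := h2.symm
      _ = ((∑ i ∈ symmDiff s t, g i) + ∑ i ∈ s ∩ t, g i) + ∑ i ∈ s ∩ t, g i := by rw [h1]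
      _ = (∑ i ∈ symmDiff s t, g i) + ((∑ i ∈ s ∩ t, g i) + ∑ i ∈ s ∩ t, g i) := by
            rw [add_assoc]
      _ = ∑ i ∈ symmDiff s t, g i := by rw [hself, add_zero]
  have hginH : ∀ i, g i ∈ H := fun i => ⟨{i}, by simp⟩
  have hHinf : H.Infinite := Set.infinite_of_injective_forall_mem hg hginH
  -- key step: find a nonzero element of H with support disjoint from F
  have step : ∀ F : Finset ℕ, ∃ h ∈ H, h ≠ 0 ∧ Disjoint h.support F := by
    intro F
    have hfin : (Set.univ : Set ({x // x ∈ F} → ZMod 2)).Finite := Set.finite_univ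
    obtain ⟨h₁, hh₁, h₂, hh₂, hne, heq⟩ :=
      hHinf.exists_ne_map_eq_of_mapsTo
        (f := fun (h : ℕ →₀ ZMod 2) (x : {x // x ∈ F}) => h x)
        (fun _ _ => Set.mem_univ _) hfin
    refine ⟨h₁ + h₂, hadd _ hh₁ _ hh₂, ?_, ?_⟩
    · intro h0
      apply hne
      have := hself h₂
      calc h₁ = h₁ + 0 := by rw [add_zero]
        _ = h₁ + (h₂ + h₂) := by rw [this]
        _ = (h₁ + h₂) + h₂ := by rw [add_assoc]
        _ = 0 + h₂ := by rw [h0]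
        _ = h₂ := by rw [zero_add]
    · rw [Finset.disjoint_left]
      intro a ha haF
      have : h₁ a = h₂ a := congrFun heq ⟨a, haF⟩
      have hz : (h₁ + h₂) a = 0 := by
        rw [Finsupp.add_apply, this]
        have : ∀ b : ZMod 2, b + b = 0 := by decide
        exact this _
      exact (Finsupp.mem_support_iff.mp ha) hz
  -- build elements of H with arbitrarily large support
  have main : ∀ n, ∃ h ∈ H, n ≤ h.support.card := by
    intro n
    induction n with
    | zero => exact ⟨0, ⟨∅, by simp⟩, Nat.zero_le _⟩
    | succ n ih =>
      obtain ⟨h, hh, hcard⟩ := ih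
      obtain ⟨h', hh', hne', hdisj⟩ := step h.support
      refine ⟨h + h', hadd _ hh _ hh', ?_⟩
      have hd : Disjoint h.support h'.support := hdisj.symm
      rw [Finsupp.support_add_eq hd, Finset.card_union_of_disjoint hd]
      have : h'.support.Nonempty := Finsupp.support_nonempty_iff.mpr hne'
      have := Finset.card_pos.mpr this
      omega
  obtain ⟨h, hh, hcard⟩ := main (m + 1)
  have := hHbound h hh
  omega
end
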